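/- arXiv:2006.05535 — 2 statements merged into one kernel-verified Lean document; each statement's English description precedes it below -/
import Mathlib

section
/- The multi-bit encoder satisfies ε-local differential privacy: for all x, x' ∈ [α,β]^d and all outputs y ∈ {−1,0,1}^d, Pr[M(x) = y] ≤ e^ε · Pr[M(x') = y]. -/
open Real Finset

/-- Per-coordinate probability that the multi-bit encoder outputs `1` on a sampled
coordinate with input value `xi`. -/
noncomputable def mbProb1 (α β ε : ℝ) (m : ℕ) (xi : ℝ) : ℝ :=
  1 / (exp (ε / m) + 1) + (xi - α) / (β - α) * ((exp (ε / m) - 1) / (exp (ε / m) + 1))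

/-- Probability that the multi-bit encoder with sampling parameter `m` on input
`x : Fin d → ℝ` outputs the vector `y ∈ {-1,0,1}^d`: a uniform `m`-subset of the
coordinates is nonzero (probability `1 / (d choose m)` for each such support), and on each
sampled coordinate the output is `1` with probability `mbProb1` and `-1` otherwise. -/
noncomputable def mbMechProb (α β ε : ℝ) (m d : ℕ) (x y : Fin d → ℝ) : ℝ :=
  if (univ.filter fun i => y i ≠ 0).card = m then
    (∏ i ∈ univ.filter fun i => y i ≠ 0,
      (if y i = 1 then mbProb1 α β ε m (x i) else 1 - mbProb1 α β ε m (x i)))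
      / (d.choose m : ℝ)
  else 0

/-!
Every sampled coordinate is a randomized response with ratio `E = exp (ε / m)`: both
`mbProb1` and its complement lie in `[1 / (E + 1), E / (E + 1)]`, an interval whose endpoints
differ by the factor `E`. So each of the `m` factors of `mbMechProb` changes by at most `E`
when the input changes, the normalisation `1 / (d choose m)` does not depend on the input,
and `E ^ m = exp ε`.
-/

section RandomizedResponse

variable {E : ℝ}

theorem interpolate_mem_Icc_inv_add_one (hE : 1 ≤ E) {t : ℝ} (ht : t ∈ Set.Icc 0 1) :
    1 / (E + 1) + t * ((E - 1) / (E + 1)) ∈ Set.Icc (1 / (E + 1)) (E / (E + 1)) := by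
  have hc : 0 ≤ (E - 1) / (E + 1) := div_nonneg (by linarith) (by linarith)
  have hsum : 1 / (E + 1) + (E - 1) / (E + 1) = E / (E + 1) := by ring
  constructor
  · exact le_add_of_nonneg_right (mul_nonneg ht.1 hc)
  · linarith [mul_le_of_le_one_left hc ht.2]

theorem one_sub_mem_Icc_inv_add_one (hE : 0 ≤ E) {p : ℝ}
    (hp : p ∈ Set.Icc (1 / (E + 1)) (E / (E + 1))) :
    1 - p ∈ Set.Icc (1 / (E + 1)) (E / (E + 1)) := by
  have hsum : 1 / (E + 1) + E / (E + 1) = 1 := by field_simp; ring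
  constructor <;> linarith [hp.1, hp.2]

theorem le_mul_of_mem_Icc_inv_add_one (hE : 0 ≤ E) {a b : ℝ}
    (ha : a ∈ Set.Icc (1 / (E + 1)) (E / (E + 1)))
    (hb : b ∈ Set.Icc (1 / (E + 1)) (E / (E + 1))) : a ≤ E * b :=
  calc a ≤ E / (E + 1) := ha.2
    _ = E * (1 / (E + 1)) := (mul_one_div E (E + 1)).symm
    _ ≤ E * b := mul_le_mul_of_nonneg_left hb.1 hE

end RandomizedResponse

theorem Finset.prod_le_pow_card_mul_prod {ι R : Type*} [CommMonoidWithZero R] [Preorder R]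
    [ZeroLEOneClass R] [PosMulMono R] (s : Finset ι) {f g : ι → R} {c : R}
    (hf : ∀ i ∈ s, 0 ≤ f i) (hfg : ∀ i ∈ s, f i ≤ c * g i) :
    ∏ i ∈ s, f i ≤ c ^ s.card * ∏ i ∈ s, g i :=
  calc ∏ i ∈ s, f i ≤ ∏ i ∈ s, c * g i := prod_le_prod hf hfg
    _ = c ^ s.card * ∏ i ∈ s, g i := by rw [prod_mul_distrib, prod_const]

section MultibitEncoder

variable {α β ε : ℝ} {m : ℕ}

theorem mbProb1_mem_Icc (hε : 0 ≤ ε) {xi : ℝ} (hxi : xi ∈ Set.Icc α β) :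
    mbProb1 α β ε m xi ∈
      Set.Icc (1 / (exp (ε / m) + 1)) (exp (ε / m) / (exp (ε / m) + 1)) := by
  have ht : (xi - α) / (β - α) ∈ Set.Icc 0 1 :=
    ⟨div_nonneg (sub_nonneg.2 hxi.1) (sub_nonneg.2 (hxi.1.trans hxi.2)),
      div_le_one_of_le₀ (sub_le_sub_right hxi.2 α) (sub_nonneg.2 (hxi.1.trans hxi.2))⟩
  exact interpolate_mem_Icc_inv_add_one (one_le_exp (div_nonneg hε m.cast_nonneg)) ht

theorem mbOutcomeProb_mem_Icc (hε : 0 ≤ ε) {xi : ℝ} (hxi : xi ∈ Set.Icc α β) (yi : ℝ) :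
    (if yi = 1 then mbProb1 α β ε m xi else 1 - mbProb1 α β ε m xi) ∈
      Set.Icc (1 / (exp (ε / m) + 1)) (exp (ε / m) / (exp (ε / m) + 1)) := by
  split_ifs
  · exact mbProb1_mem_Icc hε hxi
  · exact one_sub_mem_Icc_inv_add_one (exp_nonneg _) (mbProb1_mem_Icc hε hxi)

end MultibitEncoder

theorem multibit_encoder_ldp_general (α β ε : ℝ) (m d : ℕ) (hε : 0 < ε)
    (hm : 1 ≤ m) (x x' : Fin d → ℝ)
    (hx : ∀ i, x i ∈ Set.Icc α β) (hx' : ∀ i, x' i ∈ Set.Icc α β)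
    (y : Fin d → ℝ) :
    mbMechProb α β ε m d x y ≤ exp ε * mbMechProb α β ε m d x' y := by
  unfold mbMechProb
  split_ifs with hsupp
  · rw [mul_div_assoc']
    gcongr ?_ / _
    have hexp : exp (ε / m) ^ m = exp ε := by
      rw [← exp_nat_mul, mul_div_cancel₀ ε (by positivity)]
    rw [← hexp, ← hsupp]
    refine prod_le_pow_card_mul_prod _ (fun i _ => ?_) (fun i _ => ?_)
    · exact (one_div_nonneg.2 (by positivity)).trans (mbOutcomeProb_mem_Icc hε.le (hx i) (y i)).1
    · exact le_mul_of_mem_Icc_inv_add_one (exp_nonneg _)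
        (mbOutcomeProb_mem_Icc hε.le (hx i) (y i)) (mbOutcomeProb_mem_Icc hε.le (hx' i) (y i))
  · simp

/-- the multi-bit encoder satisfies `ε`-local differential privacy. -/
theorem multibit_encoder_ldp (α β ε : ℝ) (m d : ℕ) (hαβ : α < β) (hε : 0 < ε)
    (hm : 1 ≤ m) (hmd : m ≤ d) (x x' : Fin d → ℝ)
    (hx : ∀ i, x i ∈ Set.Icc α β) (hx' : ∀ i, x' i ∈ Set.Icc α β)
    (y : Fin d → ℝ) (hy : ∀ i, y i = -1 ∨ y i = 0 ∨ y i = 1) :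
    mbMechProb α β ε m d x y ≤ exp ε * mbMechProb α β ε m d x' y :=
  multibit_encoder_ldp_general α β ε m d hε hm x x' hx hx' y
end

section
/- The function f(z) = z·coth²(z/2) is strictly convex on (0, ∞). -/
/- The second derivative of `z ↦ z q(z)²`, with `q = coth (z/2)`, is `(q² - 1)(z(3q² - 1) - 4q)/2`,
since `q' = (1 - q²)/2`. Its sign is that of `z(3q² - 1) - 4q > 2zq² - 4q = 2q(zq - 2)`, and
`zq > 2` is the inequality `tanh t < t` at `t = z/2`. -/

open Real

namespace Real

noncomputable def coth (x : ℝ) : ℝ := cosh x / sinh x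

theorem sinh_lt_mul_cosh {t : ℝ} (ht : 0 < t) : sinh t < t * cosh t := by
  obtain ⟨c, ⟨hc₀, hct⟩, hc⟩ := exists_hasDerivAt_eq_slope sinh cosh ht
    continuous_sinh.continuousOn fun x _ => hasDerivAt_sinh x
  rw [sinh_zero, sub_zero, sub_zero, eq_div_iff ht.ne'] at hc
  have hcosh : cosh c < cosh t := cosh_lt_cosh.2 <| by
    rwa [abs_of_pos hc₀, abs_of_pos ht]
  rw [← hc, mul_comm]
  exact mul_lt_mul_of_pos_left hcosh ht

theorem one_lt_coth {t : ℝ} (ht : 0 < t) : 1 < coth t :=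
  (one_lt_div (sinh_pos_iff.2 ht)).2 (sinh_lt_cosh t)

theorem one_lt_mul_coth {t : ℝ} (ht : 0 < t) : 1 < t * coth t := by
  rw [coth, ← mul_div_assoc, one_lt_div (sinh_pos_iff.2 ht)]
  exact sinh_lt_mul_cosh ht

theorem hasDerivAt_coth {x : ℝ} (hx : x ≠ 0) : HasDerivAt coth (1 - coth x ^ 2) x := by
  have hs : sinh x ≠ 0 := sinh_ne_zero.2 hx
  refine ((hasDerivAt_cosh x).div (hasDerivAt_sinh x) hs).congr_deriv ?_
  rw [coth, div_pow, one_sub_div (pow_ne_zero 2 hs)]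
  ring

theorem hasDerivAt_coth_half {z : ℝ} (hz : z ≠ 0) :
    HasDerivAt (fun y => coth (y / 2)) ((1 - coth (z / 2) ^ 2) / 2) z := by
  have hhalf : HasDerivAt (fun y : ℝ => y / 2) (1 / 2) z := (hasDerivAt_id z).div_const 2
  refine ((hasDerivAt_coth (div_ne_zero hz two_ne_zero)).comp z hhalf).congr_deriv ?_
  ring

theorem hasDerivAt_mul_coth_half_sq {z : ℝ} (hz : z ≠ 0) :
    HasDerivAt (fun y => y * coth (y / 2) ^ 2)
      (coth (z / 2) ^ 2 + z * coth (z / 2) * (1 - coth (z / 2) ^ 2)) z := by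
  refine ((hasDerivAt_id z).mul ((hasDerivAt_coth_half hz).pow 2)).congr_deriv ?_
  simp only [Pi.pow_apply, id_eq, Nat.cast_ofNat]
  ring

theorem deriv2_mul_coth_half_sq {z : ℝ} (hz : 0 < z) :
    deriv^[2] (fun y => y * coth (y / 2) ^ 2) z =
      (coth (z / 2) ^ 2 - 1) * (z * (3 * coth (z / 2) ^ 2 - 1) - 4 * coth (z / 2)) / 2 := by
  have hderiv : deriv (fun y => y * coth (y / 2) ^ 2) =ᶠ[nhds z]
      fun y => coth (y / 2) ^ 2 + y * coth (y / 2) * (1 - coth (y / 2) ^ 2) := by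
    filter_upwards [Ioi_mem_nhds hz] with y hy using (hasDerivAt_mul_coth_half_sq hy.ne').deriv
  have hq := hasDerivAt_coth_half hz.ne'
  rw [Function.iterate_succ_apply', Function.iterate_one, hderiv.deriv_eq]
  refine (((hq.pow 2).add (((hasDerivAt_id z).mul hq).mul
    ((hasDerivAt_const z 1).sub (hq.pow 2)))).congr_deriv ?_).deriv
  simp only [Pi.pow_apply, Pi.mul_apply, Pi.sub_apply, id_eq, Nat.cast_ofNat]
  ring

theorem deriv2_mul_coth_half_sq_pos {z : ℝ} (hz : 0 < z) :
    0 < deriv^[2] (fun y => y * coth (y / 2) ^ 2) z := by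
  rw [deriv2_mul_coth_half_sq hz]
  have hq : 1 < coth (z / 2) := one_lt_coth (half_pos hz)
  have hzq : 1 < z / 2 * coth (z / 2) := one_lt_mul_coth (half_pos hz)
  have hsign : 0 < z * (3 * coth (z / 2) ^ 2 - 1) - 4 * coth (z / 2) := by nlinarith
  have hsq : 0 < coth (z / 2) ^ 2 - 1 := by nlinarith
  positivity

end Real

/-- the function `f(z) = z·coth²(z/2)` is strictly convex on `(0,∞)`. -/
theorem strictConvexOn_z_coth_sq :
    StrictConvexOn ℝ (Set.Ioi (0 : ℝ))
      (fun z : ℝ => z * (Real.cosh (z / 2) / Real.sinh (z / 2)) ^ 2) := by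
  refine strictConvexOn_of_deriv2_pos (convex_Ioi 0) (fun z hz => ?_) fun z hz => ?_
  · exact (hasDerivAt_mul_coth_half_sq (ne_of_gt hz)).continuousAt.continuousWithinAt
  · rw [interior_Ioi] at hz
    exact deriv2_mul_coth_half_sq_pos hz
end
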